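/- Define S_{C1,C2}(x) = Σ_{m,n≥0} q^{2·C(m+1,2)+C(n+1,2)+mn+C1·m+C2·n} x^{2m+n} / ((q;q)_m (q;q)_n). Then S_{0,0}(x) = (1+x²q²) S_{0,0}(xq) + (xq+x²q³) S_{1,0}(xq) and S_{1,0}(x) = S_{0,0}(xq) + (xq+x²q³) S_{1,0}(xq). -/

import Mathlib

noncomputable section

/-- Base coefficient ring: formal Laurent series over ℚ (a field), so that
integer powers of `q` and inverses of Pochhammer symbols make sense. -/
abbrev R : Type := LaurentSeries ℚ

/-- The formal variable `q`. -/
def q : R := HahnSeries.single 1 1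

/-- The finite q-Pochhammer symbol `(a; b)_n = ∏_{j=1}^n (1 - a b^(j-1))`. -/
def poch (a b : R) (n : ℕ) : R := ∏ j ∈ Finset.range n, (1 - a * b ^ j)

/-- Formal substitution `x ↦ c·x` in a power series in `x` over `R`. -/
def subst (c : R) (f : PowerSeries R) : PowerSeries R :=
  PowerSeries.mk fun k => c ^ k * PowerSeries.coeff k f

/-- `S_{C1,C2}(x) = Σ_{m,n} q^{2C(m+1,2)+C(n+1,2)+mn+C1 m+C2 n} x^{{2m+n}}
/((q;q)_m (q;q)_n)`, as a power series in `x` over `R`. -/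
def S (C1 C2 : ℤ) : PowerSeries R :=
  PowerSeries.mk fun k =>
    ∑ p ∈ (Finset.range (k+1) ×ˢ Finset.range (k+1)).filter
        (fun p => 2 * p.1 + p.2 = k),
      q ^ (2 * ((p.1+1).choose 2 : ℤ) + ((p.2+1).choose 2 : ℤ)
            + (p.1 : ℤ) * (p.2 : ℤ) + C1 * (p.1 : ℤ) + C2 * (p.2 : ℤ))
        * (poch q q p.1)⁻¹ * (poch q q p.2)⁻¹

/-!
Write `S_{C1,C2} = Σ t_{C1,C2}(m,n) x^(2m+n)`. Raising `C1` (resp. `C2`) by one multiplies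
`t(m,n)` by `q^m` (resp. `q^n`), so substituting `x ↦ qx`, which multiplies it by `q^(2m+n)`,
is the shift `(C1,C2) ↦ (C1+2,C2+1)`. In the difference `S_{C1,C2} - S_{C1+1,C2}` the factor
`1 - q^m` cancels the last factor of `(q;q)_m`, and reindexing `m ↦ m+1` gives
`S_{C1,C2} - S_{C1+1,C2} = x² q^(C1+2) S_{C1+2,C2+1}`; likewise
`S_{C1,C2} - S_{C1,C2+1} = x q^(C2+1) S_{C1+1,C2+1}`. The second functional equation is the sum
of these two at `(1,0)` and `(2,0)`, and the first adds the former at `(0,0)`.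
-/

open PowerSeries (X C coeff mk)

def weightPairs (k : ℕ) : Finset (ℕ × ℕ) :=
  (Finset.range (k + 1) ×ˢ Finset.range (k + 1)).filter fun p => 2 * p.1 + p.2 = k

theorem mem_weightPairs {k : ℕ} {p : ℕ × ℕ} : p ∈ weightPairs k ↔ 2 * p.1 + p.2 = k := by
  simp only [weightPairs, Finset.mem_filter, Finset.mem_product, Finset.mem_range]
  omega

section WeightedSeries

variable {A : Type*}

def weightedSeries [Semiring A] (F : ℕ → ℕ → A) : PowerSeries A :=
  mk fun k => ∑ p ∈ weightPairs k, F p.1 p.2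

theorem coeff_weightedSeries [Semiring A] (F : ℕ → ℕ → A) (k : ℕ) :
    coeff k (weightedSeries F) = ∑ p ∈ weightPairs k, F p.1 p.2 :=
  PowerSeries.coeff_mk _ _

theorem weightedSeries_sub [Ring A] (F G : ℕ → ℕ → A) :
    weightedSeries (fun m n => F m n - G m n) = weightedSeries F - weightedSeries G := by
  ext k
  simp only [coeff_weightedSeries, map_sub, Finset.sum_sub_distrib]

theorem weightedSeries_const_mul [Semiring A] (c : A) (F : ℕ → ℕ → A) :
    weightedSeries (fun m n => c * F m n) = C c * weightedSeries F := by
  ext k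
  simp only [coeff_weightedSeries, PowerSeries.coeff_C_mul, Finset.mul_sum]

theorem weightedSeries_eq_X_pow_mul [Semiring A] (F : ℕ → ℕ → A) (i j : ℕ)
    (hF : ∀ m n, m < i ∨ n < j → F m n = 0) :
    weightedSeries F = X ^ (2 * i + j) * weightedSeries fun m n => F (m + i) (n + j) := by
  ext k
  rw [PowerSeries.coeff_X_pow_mul', coeff_weightedSeries]
  split_ifs with hk
  · let shift : ℕ × ℕ → ℕ × ℕ := fun p => (p.1 + i, p.2 + j)
    have hshift : Set.InjOn shift (weightPairs (k - (2 * i + j))) := by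
      intro p _ p' _ h
      simp only [shift, Prod.mk.injEq] at h
      exact Prod.ext (by omega) (by omega)
    rw [coeff_weightedSeries, ← Finset.sum_image (g := shift) (f := fun p => F p.1 p.2) hshift]
    refine (Finset.sum_subset ?_ ?_).symm
    · intro p hp
      obtain ⟨p', hp', rfl⟩ := Finset.mem_image.mp hp
      rw [mem_weightPairs] at hp' ⊢
      simp only [shift]
      omega
    · intro p hp hp'
      refine hF _ _ (by_contra fun h => hp' (Finset.mem_image.mpr ⟨(p.1 - i, p.2 - j), ?_, ?_⟩))
      · rw [mem_weightPairs] at hp ⊢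
        omega
      · exact Prod.ext (by simp only [shift]; omega) (by simp only [shift]; omega)
  · refine Finset.sum_eq_zero fun p hp => hF _ _ ?_
    rw [mem_weightPairs] at hp
    omega

end WeightedSeries

theorem subst_weightedSeries (c : R) (F : ℕ → ℕ → R) :
    subst c (weightedSeries F) = weightedSeries fun m n => c ^ (2 * m + n) * F m n := by
  refine PowerSeries.ext fun k => ?_
  simp only [subst, PowerSeries.coeff_mk, coeff_weightedSeries, Finset.mul_sum]
  refine Finset.sum_congr rfl fun p hp => ?_
  rw [mem_weightPairs.mp hp]

theorem q_ne_zero : q ≠ 0 :=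
  HahnSeries.single_ne_zero one_ne_zero

theorem one_sub_q_pow_ne_zero {n : ℕ} (hn : n ≠ 0) : (1 : R) - q ^ n ≠ 0 := by
  intro h
  have h0 := congrArg (HahnSeries.coeff · 0) h
  have hn' : (0 : ℤ) ≠ n := by omega
  simp [q, HahnSeries.single_pow, hn'] at h0

theorem one_sub_q_pow_mul_inv_poch_succ (n : ℕ) :
    (1 - q ^ (n + 1)) * (poch q q (n + 1))⁻¹ = (poch q q n)⁻¹ := by
  rw [poch, Finset.prod_range_succ, ← pow_succ', mul_inv, mul_left_comm,
    mul_inv_cancel₀ (one_sub_q_pow_ne_zero n.succ_ne_zero), mul_one]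
  rfl

def summandExponent (C1 C2 : ℤ) (m n : ℕ) : ℤ :=
  2 * ((m + 1).choose 2 : ℤ) + ((n + 1).choose 2 : ℤ) + (m : ℤ) * (n : ℤ) + C1 * (m : ℤ)
    + C2 * (n : ℤ)

def summand (C1 C2 : ℤ) (m n : ℕ) : R :=
  q ^ summandExponent C1 C2 m n * (poch q q m)⁻¹ * (poch q q n)⁻¹

theorem S_eq_weightedSeries (C1 C2 : ℤ) : S C1 C2 = weightedSeries (summand C1 C2) :=
  rfl

theorem add_two_choose_two (k : ℕ) : (k + 2).choose 2 = (k + 1).choose 2 + (k + 1) := by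
  rw [Nat.choose_succ_succ', Nat.choose_one_right, add_comm]

section Summand

variable (C1 C2 : ℤ) (m n : ℕ)

theorem summand_C1_add_one : summand (C1 + 1) C2 m n = q ^ m * summand C1 C2 m n := by
  have h : summandExponent (C1 + 1) C2 m n = summandExponent C1 C2 m n + m := by
    unfold summandExponent; ring
  rw [summand, summand, h, zpow_add₀ q_ne_zero, zpow_natCast]
  ring

theorem summand_C2_add_one : summand C1 (C2 + 1) m n = q ^ n * summand C1 C2 m n := by
  have h : summandExponent C1 (C2 + 1) m n = summandExponent C1 C2 m n + n := by
    unfold summandExponent; ring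
  rw [summand, summand, h, zpow_add₀ q_ne_zero, zpow_natCast]
  ring

theorem one_sub_q_pow_mul_summand_succ_left :
    (1 - q ^ (m + 1)) * summand C1 C2 (m + 1) n
      = q ^ (C1 + 2) * summand (C1 + 2) (C2 + 1) m n := by
  have h : summandExponent C1 C2 (m + 1) n
      = summandExponent (C1 + 2) (C2 + 1) m n + (C1 + 2) := by
    unfold summandExponent; push_cast [add_two_choose_two]; ring
  rw [summand, summand, h, zpow_add₀ q_ne_zero]
  linear_combination q ^ summandExponent (C1 + 2) (C2 + 1) m n * q ^ (C1 + 2) * (poch q q n)⁻¹ *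
    one_sub_q_pow_mul_inv_poch_succ m

theorem one_sub_q_pow_mul_summand_succ_right :
    (1 - q ^ (n + 1)) * summand C1 C2 m (n + 1)
      = q ^ (C2 + 1) * summand (C1 + 1) (C2 + 1) m n := by
  have h : summandExponent C1 C2 m (n + 1)
      = summandExponent (C1 + 1) (C2 + 1) m n + (C2 + 1) := by
    unfold summandExponent; push_cast [add_two_choose_two]; ring
  rw [summand, summand, h, zpow_add₀ q_ne_zero]
  linear_combination q ^ summandExponent (C1 + 1) (C2 + 1) m n * q ^ (C2 + 1) * (poch q q m)⁻¹ *
    one_sub_q_pow_mul_inv_poch_succ n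

end Summand

theorem subst_q_S (C1 C2 : ℤ) : subst q (S C1 C2) = S (C1 + 2) (C2 + 1) := by
  simp only [S_eq_weightedSeries, subst_weightedSeries]
  congr 1
  funext m n
  rw [summand_C2_add_one, show C1 + 2 = C1 + 1 + 1 by ring, summand_C1_add_one,
    summand_C1_add_one]
  ring

theorem S_sub_S_C1_add_one (C1 C2 : ℤ) :
    S C1 C2 - S (C1 + 1) C2 = X ^ 2 * C (q ^ (C1 + 2)) * S (C1 + 2) (C2 + 1) := by
  have hdiff : ∀ m n, summand C1 C2 m n - summand (C1 + 1) C2 m n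
      = (1 - q ^ m) * summand C1 C2 m n := fun m n => by
    rw [summand_C1_add_one]; ring
  rw [S_eq_weightedSeries, S_eq_weightedSeries, ← weightedSeries_sub,
    weightedSeries_eq_X_pow_mul _ 1 0]
  · simp only [hdiff, one_sub_q_pow_mul_summand_succ_left, weightedSeries_const_mul, add_zero,
      mul_one]
    rw [S_eq_weightedSeries, mul_assoc]
  · rintro m n (hm | hn)
    · rw [hdiff, Nat.lt_one_iff.mp hm, pow_zero, sub_self, zero_mul]
    · omega

theorem S_sub_S_C2_add_one (C1 C2 : ℤ) :
    S C1 C2 - S C1 (C2 + 1) = X * C (q ^ (C2 + 1)) * S (C1 + 1) (C2 + 1) := by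
  have hdiff : ∀ m n, summand C1 C2 m n - summand C1 (C2 + 1) m n
      = (1 - q ^ n) * summand C1 C2 m n := fun m n => by
    rw [summand_C2_add_one]; ring
  rw [S_eq_weightedSeries, S_eq_weightedSeries, ← weightedSeries_sub,
    weightedSeries_eq_X_pow_mul _ 0 1]
  · simp only [hdiff, one_sub_q_pow_mul_summand_succ_right, weightedSeries_const_mul, add_zero,
      mul_zero, zero_add, pow_one]
    rw [S_eq_weightedSeries, mul_assoc]
  · rintro m n (hm | hn)
    · omega
    · rw [hdiff, Nat.lt_one_iff.mp hn, pow_zero, sub_self, zero_mul]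

theorem functional_equation_system :
    S 0 0 = (1 + PowerSeries.X ^ 2 * PowerSeries.C (q ^ 2)) * subst q (S 0 0)
        + (PowerSeries.X * PowerSeries.C q
            + PowerSeries.X ^ 2 * PowerSeries.C (q ^ 3)) * subst q (S 1 0) ∧
    S 1 0 = subst q (S 0 0)
        + (PowerSeries.X * PowerSeries.C q
            + PowerSeries.X ^ 2 * PowerSeries.C (q ^ 3)) * subst q (S 1 0) := by
  have h00 : S 0 0 - S 1 0 = X ^ 2 * C (q ^ 2) * S 2 1 := by
    simpa using S_sub_S_C1_add_one 0 0
  have h10 : S 1 0 - S 2 0 = X ^ 2 * C (q ^ 3) * S 3 1 := by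
    simpa using S_sub_S_C1_add_one 1 0
  have h20 : S 2 0 - S 2 1 = X * C q * S 3 1 := by
    simpa using S_sub_S_C2_add_one 2 0
  have hsubst00 : subst q (S 0 0) = S 2 1 := by simpa using subst_q_S 0 0
  have hsubst10 : subst q (S 1 0) = S 3 1 := by simpa using subst_q_S 1 0
  rw [hsubst00, hsubst10]
  exact ⟨by linear_combination h00 + h10 + h20, by linear_combination h10 + h20⟩
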